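/- Let d ≥ 1 and let μ = (1/2)δ_{e₁} + (1/2)δ_{−e₁} on ℝ^d. Then for every t > 0, the (1,1) entry of the Hessian of the log-density of μ_t relative to the standard Gaussian satisfies e₁ᵀ(∇²log p_t(0) + I_d)e₁ = 1 − 1/(1−e^{−2t}) + e^{−2t}/(1−e^{−2t})², and t²·e₁ᵀ(∇²log p_t(0) + I_d)e₁ → 1/4 as t → 0⁺. Consequently (1−e^{−2t})·e₁ᵀ(∇²log p_t(0) + I_d)e₁ → +∞ as t → 0⁺, so there is no constant β̃₀ such that the relative score x ↦ ∇log p_t(x) + x is (β̃₀/(1−e^{−2t}))-Lipschitz for all t ∈ (0,1): the time-varying smoothness assumption fails for mixtures of two point masses. -/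

import Mathlib

open MeasureTheory Real
open scoped RealInnerProductSpace ENNReal Classical

noncomputable section

/-- `Euc d` is Euclidean space `ℝ^d`. -/
abbrev Euc (d : ℕ) := EuclideanSpace ℝ (Fin d)

/-- The standard Gaussian measure `N(0, I_d)` on `ℝ^d`. -/
def stdGaussian (d : ℕ) : Measure (Euc d) :=
  volume.withDensity fun x =>
    ENNReal.ofReal ((2 * π) ^ (-(d : ℝ) / 2) * Real.exp (-‖x‖ ^ 2 / 2))

/-- The density `p_t` of the Ornstein–Uhlenbeck flow of `μ` at time `t`. -/
def ouDensity (d : ℕ) (μ : Measure (Euc d)) (t : ℝ) (x : Euc d) : ℝ :=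
  (2 * π * (1 - Real.exp (-2 * t))) ^ (-(d : ℝ) / 2) *
    ∫ y, Real.exp (-‖x - Real.exp (-t) • y‖ ^ 2 / (2 * (1 - Real.exp (-2 * t)))) ∂μ

/-- The Ornstein–Uhlenbeck flow `μ_t` of `μ` at time `t`, i.e. the measure with
density `p_t` with respect to Lebesgue measure. -/
def ouFlow (d : ℕ) (μ : Measure (Euc d)) (t : ℝ) : Measure (Euc d) :=
  volume.withDensity fun x => ENNReal.ofReal (ouDensity d μ t x)

/-- The relative score `x ↦ ∇ log p_t(x) + x` of `μ_t`. -/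
def relScore (d : ℕ) (μ : Measure (Euc d)) (t : ℝ) (x : Euc d) : Euc d :=
  gradient (fun z => Real.log (ouDensity d μ t z)) x + x

/-- The relative Fisher information `FI(μ_t ‖ γ_d) = ∫ ‖∇ log p_t + x‖² dμ_t`. -/
def relFisher (d : ℕ) (μ : Measure (Euc d)) (t : ℝ) : ℝ :=
  ∫ x, ‖relScore d μ t x‖ ^ 2 ∂(ouFlow d μ t)

/-- Kullback–Leibler divergence `KL(ρ ‖ σ)`. -/
def KLdiv {α : Type*} [MeasurableSpace α] (ρ σ : Measure α) : ℝ≥0∞ :=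
  if ρ ≪ σ then ENNReal.ofReal (∫ x, Real.log ((ρ.rnDeriv σ x).toReal) ∂ρ) else ⊤

/-- The equal mixture of two point masses `(1/2)δ_e + (1/2)δ_{−e}`. -/
def twoPointMix (d : ℕ) (e : Euc d) : Measure (Euc d) :=
  (1 / 2 : ℝ≥0∞) • Measure.dirac e + (1 / 2 : ℝ≥0∞) • Measure.dirac (-e)

/-- The `(1,1)` entry `e₁ᵀ(∇²log p_t(0) + I)e₁` of the Hessian of the log-density of `μ_t`
relative to the standard Gaussian, for `μ = (1/2)δ_{e₁} + (1/2)δ_{−e₁}`. -/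
def relHess11 (d : ℕ) (hd : 1 ≤ d) (t : ℝ) : ℝ :=
  ⟪(fderiv ℝ
      (fun z =>
        gradient
          (fun w =>
            Real.log
              (ouDensity d (twoPointMix d (EuclideanSpace.single (⟨0, hd⟩ : Fin d) 1)) t w))
          z)
      (0 : Euc d)) (EuclideanSpace.single (⟨0, hd⟩ : Fin d) (1 : ℝ)),
    EuclideanSpace.single (⟨0, hd⟩ : Fin d) (1 : ℝ)⟫ + 1

/-!
For the symmetric two-point mixture the Ornstein–Uhlenbeck density is explicit: with
`s = 1 - e^{-2t}` and `λ = e^{-t}/s`, `p_t(x) ∝ exp (-‖x‖²/(2s)) cosh (λ⟪e₁, x⟫)`, so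
`∇ log p_t(x) = -x/s + λ tanh (λ⟪e₁, x⟫) e₁`. Since `tanh' 0 = 1`, the relative Hessian entry at
the origin is `1 - 1/s + λ² = (e^{-2t}/s)²`, which grows like `1/(4t²)`, faster than `1/s ~ 1/(2t)`.
A `β/s`-Lipschitz relative score has derivative of operator norm at most `β/s` at the origin,
which would bound `s` times this entry by `β`.
-/

open Filter Topology

theorem one_sub_exp_neg_two_mul_pos {t : ℝ} (ht : 0 < t) : 0 < 1 - exp (-2 * t) := by
  linarith [exp_lt_one_iff.mpr (by linarith : -2 * t < 0)]

theorem exp_neg_sq (t : ℝ) : exp (-t) ^ 2 = exp (-2 * t) := by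
  rw [← exp_nat_mul]; ring_nf

namespace Real

theorem hasDerivAt_log_cosh (x : ℝ) : HasDerivAt (fun y => log (cosh y)) (tanh x) x := by
  simpa [tanh_eq_sinh_div_cosh] using (hasDerivAt_cosh x).log (cosh_pos x).ne'

theorem hasDerivAt_tanh (x : ℝ) : HasDerivAt tanh (1 / cosh x ^ 2) x := by
  have h := (hasDerivAt_sinh x).div (hasDerivAt_cosh x) (cosh_pos x).ne'
  rw [← sq, ← sq, cosh_sq_sub_sinh_sq] at h
  rwa [show tanh = fun y => sinh y / cosh y from funext tanh_eq_sinh_div_cosh]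

end Real

section InnerProductSpace

variable {E : Type*} [NormedAddCommGroup E] [InnerProductSpace ℝ E]

theorem hasGradientAt_sub_norm_sq_add_log_cosh [CompleteSpace E] (c s l : ℝ) (e x : E) :
    HasGradientAt (fun x => c - ‖x‖ ^ 2 / (2 * s) + log (cosh (l * ⟪e, x⟫)))
      ((-s⁻¹) • x + (l * tanh (l * ⟪e, x⟫)) • e) x := by
  have hsq := (hasStrictFDerivAt_norm_sq x).hasFDerivAt.mul_const (2 * s)⁻¹
  simp only [← div_eq_mul_inv] at hsq
  have hcosh := (hasDerivAt_log_cosh (l * ⟪e, x⟫)).comp_hasFDerivAt x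
    ((l • innerSL ℝ e).hasFDerivAt (x := x))
  rw [hasGradientAt_iff_hasFDerivAt]
  refine ((hsq.const_sub c).add hcosh).congr_fderiv ?_
  ext y
  simp only [add_apply, neg_apply, smul_apply, coe_innerSL_apply, nsmul_eq_mul, smul_eq_mul,
    map_add, map_smul, InnerProductSpace.toDual_apply_apply]
  ring

theorem hasFDerivAt_smul_add_tanh_smul_zero (s l : ℝ) (e : E) :
    HasFDerivAt (fun x => (-s⁻¹) • x + (l * tanh (l * ⟪e, x⟫)) • e)
      ((-s⁻¹) • ContinuousLinearMap.id ℝ E + l ^ 2 • (innerSL ℝ e).smulRight e) 0 := by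
  have htanh := (hasDerivAt_tanh (l * ⟪e, (0 : E)⟫)).comp_hasFDerivAt (0 : E)
    ((l • innerSL ℝ e).hasFDerivAt (x := 0))
  refine (((hasFDerivAt_id (0 : E)).const_smul (-s⁻¹)).add
    ((htanh.const_mul l).smul_const e)).congr_fderiv ?_
  ext y
  simp [sq, smul_smul]

theorem HasFDerivAt.inner_apply_self_le_of_lipschitz {f : E → E} {A : E →L[ℝ] E} {x₀ : E}
    {L : ℝ} (hf : HasFDerivAt f A x₀) (hlip : ∀ x y, ‖f x - f y‖ ≤ L * ‖x - y‖) (v : E) :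
    ⟪A v, v⟫ ≤ L * ‖v‖ ^ 2 := by
  rcases eq_or_ne v 0 with rfl | hv
  · simp
  have hL : 0 ≤ L := by
    have h := hlip (x₀ + v) x₀
    rw [add_sub_cancel_left] at h
    exact nonneg_of_mul_nonneg_left ((norm_nonneg _).trans h) (norm_pos_iff.mpr hv)
  have hA : ‖A‖ ≤ L := hf.le_of_lip' hL (Filter.Eventually.of_forall fun x => hlip x x₀)
  calc ⟪A v, v⟫ ≤ ‖A v‖ * ‖v‖ := real_inner_le_norm _ _
    _ ≤ ‖A‖ * ‖v‖ * ‖v‖ := by gcongr; exact A.le_opNorm v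
    _ ≤ L * ‖v‖ ^ 2 := by rw [mul_assoc, ← sq]; gcongr

theorem exp_neg_norm_sub_sq_add_exp_neg_norm_add_sq (u v : E) (s : ℝ) :
    (exp (-‖u - v‖ ^ 2 / (2 * s)) + exp (-‖u + v‖ ^ 2 / (2 * s))) / 2 =
      exp (-(‖u‖ ^ 2 + ‖v‖ ^ 2) / (2 * s)) * cosh (⟪v, u⟫ / s) := by
  rw [norm_sub_sq_real, norm_add_sq_real, cosh_eq, mul_div_assoc', mul_add, ← exp_add, ← exp_add,
    real_inner_comm]
  congr 3 <;> ring

end InnerProductSpace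

theorem integral_twoPointMix {d : ℕ} (e : Euc d) (f : Euc d → ℝ) :
    ∫ y, f y ∂twoPointMix d e = (f e + f (-e)) / 2 := by
  have hint (a : Euc d) : Integrable f (Measure.dirac a) := integrable_dirac enorm_lt_top
  rw [twoPointMix, integral_add_measure ((hint e).smul_measure (by simp))
    ((hint (-e)).smul_measure (by simp)), integral_smul_measure, integral_smul_measure,
    integral_dirac, integral_dirac]
  simp only [ENNReal.toReal_div, ENNReal.toReal_one, ENNReal.toReal_ofNat, smul_eq_mul]
  ring

theorem ouDensity_twoPointMix {d : ℕ} (e : Euc d) (t : ℝ) (x : Euc d) :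
    ouDensity d (twoPointMix d e) t x =
      (2 * π * (1 - exp (-2 * t))) ^ (-(d : ℝ) / 2) *
        (exp (-(‖x‖ ^ 2 + exp (-2 * t) * ‖e‖ ^ 2) / (2 * (1 - exp (-2 * t)))) *
          cosh (exp (-t) / (1 - exp (-2 * t)) * ⟪e, x⟫)) := by
  rw [ouDensity, integral_twoPointMix, smul_neg, sub_neg_eq_add,
    exp_neg_norm_sub_sq_add_exp_neg_norm_add_sq, norm_smul, mul_pow, norm_of_nonneg
    (exp_pos _).le, exp_neg_sq, real_inner_smul_left]
  ring_nf

theorem gradient_log_ouDensity_twoPointMix {d : ℕ} (e : Euc d) {t : ℝ} (ht : 0 < t) :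
    gradient (fun x => log (ouDensity d (twoPointMix d e) t x)) = fun x =>
      (-(1 - exp (-2 * t))⁻¹) • x +
        (exp (-t) / (1 - exp (-2 * t)) *
          tanh (exp (-t) / (1 - exp (-2 * t)) * ⟪e, x⟫)) • e := by
  have hs := one_sub_exp_neg_two_mul_pos ht
  have hlog : (fun x => log (ouDensity d (twoPointMix d e) t x)) = fun x =>
      (log ((2 * π * (1 - exp (-2 * t))) ^ (-(d : ℝ) / 2)) -
          exp (-2 * t) * ‖e‖ ^ 2 / (2 * (1 - exp (-2 * t)))) -
        ‖x‖ ^ 2 / (2 * (1 - exp (-2 * t))) +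
        log (cosh (exp (-t) / (1 - exp (-2 * t)) * ⟪e, x⟫)) := by
    funext x
    rw [ouDensity_twoPointMix, log_mul (by positivity) (by positivity),
      log_mul (by positivity) (cosh_pos _).ne', log_exp]
    ring
  rw [hlog]
  exact funext fun x => (hasGradientAt_sub_norm_sq_add_log_cosh _ _ _ e x).gradient

theorem hasFDerivAt_gradient_log_ouDensity_twoPointMix_zero {d : ℕ} (e : Euc d) {t : ℝ}
    (ht : 0 < t) :
    HasFDerivAt (gradient (fun x => log (ouDensity d (twoPointMix d e) t x)))
      ((-(1 - exp (-2 * t))⁻¹) • ContinuousLinearMap.id ℝ (Euc d) +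
        (exp (-t) / (1 - exp (-2 * t))) ^ 2 • (innerSL ℝ e).smulRight e) 0 := by
  rw [gradient_log_ouDensity_twoPointMix e ht]
  exact hasFDerivAt_smul_add_tanh_smul_zero _ _ e

theorem relHess11_eq {d : ℕ} (hd : 1 ≤ d) {t : ℝ} (ht : 0 < t) :
    relHess11 d hd t =
      1 - 1 / (1 - exp (-2 * t)) + exp (-2 * t) / (1 - exp (-2 * t)) ^ 2 := by
  rw [relHess11, (hasFDerivAt_gradient_log_ouDensity_twoPointMix_zero _ ht).fderiv]
  simp only [add_apply, smul_apply, ContinuousLinearMap.id_apply,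
    ContinuousLinearMap.smulRight_apply, coe_innerSL_apply, inner_add_left, real_inner_smul_left,
    real_inner_self_eq_norm_sq, PiLp.norm_single, norm_one, div_pow, exp_neg_sq]
  ring

theorem relHess11_le_of_lipschitz {d : ℕ} (hd : 1 ≤ d) {t : ℝ} (ht : 0 < t) {L : ℝ}
    (hL : ∀ x y : Euc d,
      ‖relScore d (twoPointMix d (EuclideanSpace.single (⟨0, hd⟩ : Fin d) 1)) t x -
          relScore d (twoPointMix d (EuclideanSpace.single (⟨0, hd⟩ : Fin d) 1)) t y‖ ≤
        L * ‖x - y‖) :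
    relHess11 d hd t ≤ L := by
  have hG := hasFDerivAt_gradient_log_ouDensity_twoPointMix_zero
    (EuclideanSpace.single (⟨0, hd⟩ : Fin d) (1 : ℝ)) ht
  have h := HasFDerivAt.inner_apply_self_le_of_lipschitz (f := relScore d _ t)
    (hG.add (hasFDerivAt_id 0)) hL (EuclideanSpace.single (⟨0, hd⟩ : Fin d) 1)
  rw [relHess11, hG.fderiv]
  simpa [inner_add_left] using h

theorem relHess11_eq_sq {d : ℕ} (hd : 1 ≤ d) {t : ℝ} (ht : 0 < t) :
    relHess11 d hd t = (exp (-2 * t) / (1 - exp (-2 * t))) ^ 2 := by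
  have hs := (one_sub_exp_neg_two_mul_pos ht).ne'
  rw [relHess11_eq hd ht]
  generalize exp (-2 * t) = q at hs ⊢
  field_simp
  ring

theorem tendsto_one_sub_exp_neg_two_mul_div :
    Tendsto (fun t => (1 - exp (-2 * t)) / t) (𝓝[≠] 0) (𝓝 2) := by
  have h : HasDerivAt (fun t => 1 - exp (-2 * t)) 2 0 := by
    simpa using (((hasDerivAt_id (0 : ℝ)).const_mul (-2)).exp).const_sub 1
  refine (hasDerivAt_iff_tendsto_slope.mp h).congr fun t => ?_
  simp [slope_def_field]

theorem tendsto_div_one_sub_exp_neg_two_mul :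
    Tendsto (fun t => t / (1 - exp (-2 * t))) (𝓝[≠] 0) (𝓝 (1 / 2)) := by
  simpa using tendsto_one_sub_exp_neg_two_mul_div.inv₀ two_ne_zero

theorem tendsto_exp_neg_two_mul_nhdsGT :
    Tendsto (fun t => exp (-2 * t)) (𝓝[>] 0) (𝓝 1) :=
  ((by fun_prop : Continuous fun t : ℝ => exp (-2 * t)).tendsto' 0 1 (by simp)).mono_left
    nhdsWithin_le_nhds

theorem tendsto_one_sub_exp_neg_two_mul_nhdsGT :
    Tendsto (fun t => 1 - exp (-2 * t)) (𝓝[>] 0) (𝓝[>] 0) :=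
  tendsto_nhdsWithin_iff.mpr
    ⟨by simpa using tendsto_exp_neg_two_mul_nhdsGT.const_sub 1,
      eventually_mem_nhdsWithin.mono fun _ ht => one_sub_exp_neg_two_mul_pos ht⟩

theorem tendsto_sq_mul_relHess11 {d : ℕ} (hd : 1 ≤ d) :
    Tendsto (fun t => t ^ 2 * relHess11 d hd t) (𝓝[>] 0) (𝓝 (1 / 4)) := by
  have h := ((tendsto_div_one_sub_exp_neg_two_mul.mono_left (nhdsGT_le_nhdsNE 0)).mul
    tendsto_exp_neg_two_mul_nhdsGT).pow 2
  rw [show ((1 : ℝ) / 2 * 1) ^ 2 = 1 / 4 by norm_num] at h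
  refine h.congr' ?_
  filter_upwards [self_mem_nhdsWithin] with t ht
  rw [relHess11_eq_sq hd ht]
  ring

theorem tendsto_one_sub_exp_neg_two_mul_mul_relHess11_atTop {d : ℕ} (hd : 1 ≤ d) :
    Tendsto (fun t => (1 - exp (-2 * t)) * relHess11 d hd t) (𝓝[>] 0) atTop := by
  have hnum : Tendsto (fun t => exp (-2 * t) ^ 2) (𝓝[>] 0) (𝓝 1) := by
    simpa using tendsto_exp_neg_two_mul_nhdsGT.pow 2
  refine (hnum.pos_mul_atTop one_pos
    tendsto_one_sub_exp_neg_two_mul_nhdsGT.inv_tendsto_nhdsGT_zero).congr' ?_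
  filter_upwards [self_mem_nhdsWithin] with t ht
  rw [relHess11_eq_sq hd ht, Pi.inv_apply]
  field_simp [(one_sub_exp_neg_two_mul_pos ht).ne']

/-- For `μ = (1/2)δ_{e₁} + (1/2)δ_{−e₁}`:
`e₁ᵀ(∇²log p_t(0) + I)e₁ = 1 − 1/(1−e^{−2t}) + e^{−2t}/(1−e^{−2t})²`,
`t² e₁ᵀ(∇²log p_t(0) + I)e₁ → 1/4` as `t → 0⁺`, hence
`(1−e^{−2t}) e₁ᵀ(∇²log p_t(0) + I)e₁ → +∞` as `t → 0⁺`, and there is no `β̃₀` making the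
relative score `(β̃₀/(1−e^{−2t}))`-Lipschitz for all `t ∈ (0,1)`. -/
theorem statement_14 (d : ℕ) (hd : 1 ≤ d) :
    (∀ t : ℝ, 0 < t →
      relHess11 d hd t =
        1 - 1 / (1 - Real.exp (-2 * t)) +
          Real.exp (-2 * t) / (1 - Real.exp (-2 * t)) ^ 2) ∧
    Filter.Tendsto (fun t : ℝ => t ^ 2 * relHess11 d hd t)
      (nhdsWithin 0 (Set.Ioi 0)) (nhds (1 / 4)) ∧
    Filter.Tendsto (fun t : ℝ => (1 - Real.exp (-2 * t)) * relHess11 d hd t)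
      (nhdsWithin 0 (Set.Ioi 0)) Filter.atTop ∧
    ¬ ∃ β₀ : ℝ, ∀ t ∈ Set.Ioo (0 : ℝ) 1, ∀ x y : Euc d,
        ‖relScore d (twoPointMix d (EuclideanSpace.single (⟨0, hd⟩ : Fin d) 1)) t x -
            relScore d (twoPointMix d (EuclideanSpace.single (⟨0, hd⟩ : Fin d) 1)) t y‖ ≤
          β₀ / (1 - Real.exp (-2 * t)) * ‖x - y‖ := by
  refine ⟨fun t ht => relHess11_eq hd ht, tendsto_sq_mul_relHess11 hd,
    tendsto_one_sub_exp_neg_two_mul_mul_relHess11_atTop hd, ?_⟩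
  rintro ⟨β₀, hβ₀⟩
  have hbounded : ∀ t ∈ Set.Ioo (0 : ℝ) 1, (1 - exp (-2 * t)) * relHess11 d hd t ≤ β₀ :=
    fun t ht => (le_div_iff₀' (one_sub_exp_neg_two_mul_pos ht.1)).mp
      (relHess11_le_of_lipschitz hd ht.1 (hβ₀ t ht))
  obtain ⟨t, hlarge, ht⟩ :=
    (((tendsto_one_sub_exp_neg_two_mul_mul_relHess11_atTop hd).eventually_gt_atTop β₀).and
      (Ioo_mem_nhdsGT one_pos)).exists
  exact (hbounded t ht).not_gt hlarge
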